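/- Correctness of the 3SAT reduction: let φ = C1 ∧ … ∧ Ck be a 3-CNF formula over Boolean variables x1,…,xn, where each clause Cj is a set of three distinct literals. Take lifelines L = {l1,…,lk} (one per clause) and a single message m. For a literal ℓ, let i_ℓ ∈ 𝕀(L) be the seq-composition of the actions lj?m over all indices j such that ℓ occurs in Cj (and ∅ if ℓ occurs in no clause), and let i_φ = seq(alt(i_{x1}, i_{¬x1}), seq(alt(i_{x2}, i_{¬x2}), …, alt(i_{xn}, i_{¬xn})…)). Then φ is satisfiable if and only if the multi-trace μ_3SAT = (l1?m, …, lk?m) belongs to the multi-prefix closure \overline{σ_L(i_φ)}. -/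

import Mathlib

/-!
Choosing one branch of every `alt` in `i_φ` is choosing a truth value for every variable, and the
resulting multi-trace carries on lifeline `l_j` one copy of `l_j?m` for each chosen literal of
`C_j`. As `l_j?m` is the only action that ever occurs on `l_j`, `μ_3SAT` is a multi-prefix of it
exactly when every clause contains a chosen, i.e. true, literal.
-/

open scoped Classical

namespace RV

/-- A communication action: a lifeline, a kind (`true` = emission `!`,
`false` = reception `?`) and a message. -/
structure Action (Λ M : Type) where
  lifeline : Λ
  kind : Bool
  msg : M

/-- The interaction language: empty interaction, actions, the three loop
operators and the four binary operators. -/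
inductive Interaction (Λ M : Type) : Type where
  | empty : Interaction Λ M
  | act : Action Λ M → Interaction Λ M
  | loopS : Interaction Λ M → Interaction Λ M
  | loopW : Interaction Λ M → Interaction Λ M
  | loopP : Interaction Λ M → Interaction Λ M
  | strict : Interaction Λ M → Interaction Λ M → Interaction Λ M
  | seq : Interaction Λ M → Interaction Λ M → Interaction Λ M
  | par : Interaction Λ M → Interaction Λ M → Interaction Λ M
  | alt : Interaction Λ M → Interaction Λ M → Interaction Λ M

variable {Λ M : Type}

/-- `i ∈ 𝕀(L)` : all actions of `i` occur on lifelines belonging to `L`. -/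
def Interaction.lifelinesIn (L : Set Λ) : Interaction Λ M → Prop
  | .empty => True
  | .act a => a.lifeline ∈ L
  | .loopS i => i.lifelinesIn L
  | .loopW i => i.lifelinesIn L
  | .loopP i => i.lifelinesIn L
  | .strict i1 i2 => i1.lifelinesIn L ∧ i2.lifelinesIn L
  | .seq i1 i2 => i1.lifelinesIn L ∧ i2.lifelinesIn L
  | .par i1 i2 => i1.lifelinesIn L ∧ i2.lifelinesIn L
  | .alt i1 i2 => i1.lifelinesIn L ∧ i2.lifelinesIn L

/-- Lifeline removal `rmv_H` on interactions : actions occurring on a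
lifeline of `H` are replaced by the empty interaction, the term structure
is preserved (no simplification). -/
noncomputable def rmv (H : Set Λ) : Interaction Λ M → Interaction Λ M
  | .empty => .empty
  | .act a => if a.lifeline ∈ H then .empty else .act a
  | .loopS i => .loopS (rmv H i)
  | .loopW i => .loopW (rmv H i)
  | .loopP i => .loopP (rmv H i)
  | .strict i1 i2 => .strict (rmv H i1) (rmv H i2)
  | .seq i1 i2 => .seq (rmv H i1) (rmv H i2)
  | .par i1 i2 => .par (rmv H i1) (rmv H i2)
  | .alt i1 i2 => .alt (rmv H i1) (rmv H i2)

/-- The subterm of an interaction at a position (Dewey notation,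
`false` = child 1, `true` = child 2); `none` when the position is invalid.
The positions of `i` are exactly those `p` with `(subtermAt i p).isSome`,
and the symbol `i(p)` is the head symbol of `subtermAt i p`. -/
def subtermAt : Interaction Λ M → List Bool → Option (Interaction Λ M)
  | i, [] => some i
  | .loopS i, false :: p => subtermAt i p
  | .loopW i, false :: p => subtermAt i p
  | .loopP i, false :: p => subtermAt i p
  | .strict i1 _, false :: p => subtermAt i1 p
  | .strict _ i2, true :: p => subtermAt i2 p
  | .seq i1 _, false :: p => subtermAt i1 p
  | .seq _ i2, true :: p => subtermAt i2 p
  | .par i1 _, false :: p => subtermAt i1 p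
  | .par _ i2, true :: p => subtermAt i2 p
  | .alt i1 _, false :: p => subtermAt i1 p
  | .alt _ i2, true :: p => subtermAt i2 p
  | _, _ => none

/-- A multi-trace : one local trace per lifeline (components on lifelines
outside the relevant set `L` are required to be empty, see
`MultiTrace.over'`). -/
abbrev MultiTrace (Λ M : Type) := Λ → List (Action Λ M)

namespace MultiTrace

/-- `a ∧ μ` : prepend action `a` to the component of `μ` on `θ(a)`. -/
noncomputable def prepend (a : Action Λ M) (μ : MultiTrace Λ M) : MultiTrace Λ M :=
  fun l => if l = a.lifeline then a :: μ l else μ l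

/-- `μ ∧ a` : append action `a` to the component of `μ` on `θ(a)`. -/
noncomputable def append (μ : MultiTrace Λ M) (a : Action Λ M) : MultiTrace Λ M :=
  fun l => if l = a.lifeline then μ l ++ [a] else μ l

/-- The empty multi-trace `ε_L`. -/
def eps : MultiTrace Λ M := fun _ => []

/-- `μ ∈ 𝕄(L)` : components vanish outside `L` and every action of the
component on `l` occurs on `l`. -/
def over' (L : Set Λ) (μ : MultiTrace Λ M) : Prop :=
  (∀ l ∉ L, μ l = []) ∧ ∀ l, ∀ a ∈ μ l, a.lifeline = l

/-- Lifeline removal `rmv_H` on multi-traces : restriction of the tuple of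
components to `L ∖ H` (removed components become empty). -/
noncomputable def rmv (H : Set Λ) (μ : MultiTrace Λ M) : MultiTrace Λ M :=
  fun l => if l ∈ H then [] else μ l

/-- Strict sequencing `μ1 ; μ2` of multi-traces : componentwise
concatenation. -/
def concat (μ1 μ2 : MultiTrace Λ M) : MultiTrace Λ M := fun l => μ1 l ++ μ2 l

/-- Multi-prefix relation : componentwise word prefix. -/
def isPrefixOf (μ' μ : MultiTrace Λ M) : Prop := ∀ l, μ' l <+: μ l

end MultiTrace

/-- Interleaving `μ ∈ μ1 || μ2` of multi-traces. -/
inductive MTShuffle : MultiTrace Λ M → MultiTrace Λ M → MultiTrace Λ M → Prop where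
  | nilL (μ : MultiTrace Λ M) : MTShuffle MultiTrace.eps μ μ
  | nilR (μ : MultiTrace Λ M) : MTShuffle μ MultiTrace.eps μ
  | left {μ1 μ2 μ : MultiTrace Λ M} (a : Action Λ M) :
      MTShuffle μ1 μ2 μ → MTShuffle (MultiTrace.prepend a μ1) μ2 (MultiTrace.prepend a μ)
  | right {μ1 μ2 μ : MultiTrace Λ M} (a : Action Λ M) :
      MTShuffle μ1 μ2 μ → MTShuffle μ1 (MultiTrace.prepend a μ2) (MultiTrace.prepend a μ)

/-- Interleaving (shuffle) `t ∈ t1 || t2` of global traces (words). -/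
inductive ListShuffle {α : Type} : List α → List α → List α → Prop where
  | nil : ListShuffle [] [] []
  | left {t1 t2 t : List α} (a : α) : ListShuffle t1 t2 t → ListShuffle (a :: t1) t2 (a :: t)
  | right {t1 t2 t : List α} (a : α) : ListShuffle t1 t2 t → ListShuffle t1 (a :: t2) (a :: t)

/-- Conflict predicate `t ⫫ l` : the trace `t` contains an action on `l`. -/
def conflicts (t : List (Action Λ M)) (l : Λ) : Prop := ∃ a ∈ t, a.lifeline = l

/-- Weak sequencing `t ∈ t1 ;⫫ t2` of global traces : actions of `t2` may
be anticipated only when the remaining part of `t1` has no conflict on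
their lifeline. -/
inductive WeakSeq : List (Action Λ M) → List (Action Λ M) → List (Action Λ M) → Prop where
  | nilL (t : List (Action Λ M)) : WeakSeq [] t t
  | nilR (t : List (Action Λ M)) : WeakSeq t [] t
  | left {t1 t2 t : List (Action Λ M)} (a1 : Action Λ M) :
      WeakSeq t1 t2 t → WeakSeq (a1 :: t1) t2 (a1 :: t)
  | right {t1 t2 t : List (Action Λ M)} (a2 : Action Λ M) :
      ¬ conflicts t1 a2.lifeline → WeakSeq t1 t2 t → WeakSeq t1 (a2 :: t2) (a2 :: t)

/-- Projection `π_L` of a global trace onto a multi-trace. -/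
noncomputable def proj : List (Action Λ M) → MultiTrace Λ M
  | [] => MultiTrace.eps
  | a :: t => MultiTrace.prepend a (proj t)

/-- Elementwise strict sequencing on sets of multi-traces. -/
def concatSet (S1 S2 : Set (MultiTrace Λ M)) : Set (MultiTrace Λ M) :=
  {μ | ∃ μ1 ∈ S1, ∃ μ2 ∈ S2, μ = MultiTrace.concat μ1 μ2}

/-- Elementwise interleaving on sets of multi-traces. -/
def shuffleSet (S1 S2 : Set (MultiTrace Λ M)) : Set (MultiTrace Λ M) :=
  {μ | ∃ μ1 ∈ S1, ∃ μ2 ∈ S2, MTShuffle μ1 μ2 μ}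

/-- `S^{;n}`. -/
def powConcat (S : Set (MultiTrace Λ M)) : ℕ → Set (MultiTrace Λ M)
  | 0 => {MultiTrace.eps}
  | n + 1 => concatSet S (powConcat S n)

/-- Kleene closure `S^{;*}`. -/
def kleeneConcat (S : Set (MultiTrace Λ M)) : Set (MultiTrace Λ M) := ⋃ n, powConcat S n

/-- `S^{||n}`. -/
def powShuffle (S : Set (MultiTrace Λ M)) : ℕ → Set (MultiTrace Λ M)
  | 0 => {MultiTrace.eps}
  | n + 1 => shuffleSet S (powShuffle S n)

/-- Kleene closure `S^{||*}`. -/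
def kleeneShuffle (S : Set (MultiTrace Λ M)) : Set (MultiTrace Λ M) := ⋃ n, powShuffle S n

/-- The multi-trace semantics `σ_L : 𝕀(L) → 𝒫(𝕄(L))`. -/
noncomputable def sem : Interaction Λ M → Set (MultiTrace Λ M)
  | .empty => {MultiTrace.eps}
  | .act a => {MultiTrace.prepend a MultiTrace.eps}
  | .alt i1 i2 => sem i1 ∪ sem i2
  | .strict i1 i2 => concatSet (sem i1) (sem i2)
  | .seq i1 i2 => concatSet (sem i1) (sem i2)
  | .par i1 i2 => shuffleSet (sem i1) (sem i2)
  | .loopS i => kleeneConcat (sem i)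
  | .loopW i => kleeneConcat (sem i)
  | .loopP i => kleeneShuffle (sem i)

/-- Multi-prefix closure `\overline{S}` of a set of multi-traces. -/
def prefixClosure (S : Set (MultiTrace Λ M)) : Set (MultiTrace Λ M) :=
  {μ' | ∃ μ ∈ S, MultiTrace.isPrefixOf μ' μ}

/-- Termination predicate `i ↓` : `i` accepts the empty (multi-)trace. -/
inductive Terminates : Interaction Λ M → Prop where
  | empty : Terminates .empty
  | altL {i1 i2 : Interaction Λ M} : Terminates i1 → Terminates (.alt i1 i2)
  | altR {i1 i2 : Interaction Λ M} : Terminates i2 → Terminates (.alt i1 i2)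
  | strict {i1 i2 : Interaction Λ M} : Terminates i1 → Terminates i2 → Terminates (.strict i1 i2)
  | seq {i1 i2 : Interaction Λ M} : Terminates i1 → Terminates i2 → Terminates (.seq i1 i2)
  | par {i1 i2 : Interaction Λ M} : Terminates i1 → Terminates i2 → Terminates (.par i1 i2)
  | loopS (i : Interaction Λ M) : Terminates (.loopS i)
  | loopW (i : Interaction Λ M) : Terminates (.loopW i)
  | loopP (i : Interaction Λ M) : Terminates (.loopP i)

/-- Collision predicate `i ⫫̸ l` : every trace of `i` contains an action
on lifeline `l`. -/
inductive Collides : Interaction Λ M → Λ → Prop where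
  | act {a : Action Λ M} {l : Λ} : a.lifeline = l → Collides (.act a) l
  | alt {i1 i2 : Interaction Λ M} {l : Λ} :
      Collides i1 l → Collides i2 l → Collides (.alt i1 i2) l
  | strictL {i1 i2 : Interaction Λ M} {l : Λ} : Collides i1 l → Collides (.strict i1 i2) l
  | strictR {i1 i2 : Interaction Λ M} {l : Λ} : Collides i2 l → Collides (.strict i1 i2) l
  | seqL {i1 i2 : Interaction Λ M} {l : Λ} : Collides i1 l → Collides (.seq i1 i2) l
  | seqR {i1 i2 : Interaction Λ M} {l : Λ} : Collides i2 l → Collides (.seq i1 i2) l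
  | parL {i1 i2 : Interaction Λ M} {l : Λ} : Collides i1 l → Collides (.par i1 i2) l
  | parR {i1 i2 : Interaction Λ M} {l : Λ} : Collides i2 l → Collides (.par i1 i2) l

/-- Pruning relation `i ≃^⫫_l i'`. -/
inductive Prunes : Interaction Λ M → Λ → Interaction Λ M → Prop where
  | empty (l : Λ) : Prunes .empty l .empty
  | act {a : Action Λ M} {l : Λ} : a.lifeline ≠ l → Prunes (.act a) l (.act a)
  | strict {i1 i2 i1' i2' : Interaction Λ M} {l : Λ} :
      Prunes i1 l i1' → Prunes i2 l i2' → Prunes (.strict i1 i2) l (.strict i1' i2')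
  | seq {i1 i2 i1' i2' : Interaction Λ M} {l : Λ} :
      Prunes i1 l i1' → Prunes i2 l i2' → Prunes (.seq i1 i2) l (.seq i1' i2')
  | par {i1 i2 i1' i2' : Interaction Λ M} {l : Λ} :
      Prunes i1 l i1' → Prunes i2 l i2' → Prunes (.par i1 i2) l (.par i1' i2')
  | altBoth {i1 i2 i1' i2' : Interaction Λ M} {l : Λ} :
      Prunes i1 l i1' → Prunes i2 l i2' → Prunes (.alt i1 i2) l (.alt i1' i2')
  | altL {i1 i2 i1' : Interaction Λ M} {l : Λ} :
      Prunes i1 l i1' → Collides i2 l → Prunes (.alt i1 i2) l i1'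
  | altR {i1 i2 i2' : Interaction Λ M} {l : Λ} :
      Prunes i2 l i2' → Collides i1 l → Prunes (.alt i1 i2) l i2'
  | loopS {i1 i1' : Interaction Λ M} {l : Λ} :
      Prunes i1 l i1' → Prunes (.loopS i1) l (.loopS i1')
  | loopW {i1 i1' : Interaction Λ M} {l : Λ} :
      Prunes i1 l i1' → Prunes (.loopW i1) l (.loopW i1')
  | loopP {i1 i1' : Interaction Λ M} {l : Λ} :
      Prunes i1 l i1' → Prunes (.loopP i1) l (.loopP i1')
  | loopSElim {i1 : Interaction Λ M} {l : Λ} : Collides i1 l → Prunes (.loopS i1) l .empty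
  | loopWElim {i1 : Interaction Λ M} {l : Λ} : Collides i1 l → Prunes (.loopW i1) l .empty
  | loopPElim {i1 : Interaction Λ M} {l : Λ} : Collides i1 l → Prunes (.loopP i1) l .empty

/-- Execution relation `i →[a@p] i'` of the structural operational
semantics (positions over `{1,2}` encoded by `false`/`true`). -/
inductive Executes : Interaction Λ M → Action Λ M → List Bool → Interaction Λ M → Prop where
  | act (a : Action Λ M) : Executes (.act a) a [] .empty
  | altL {i1 i1' : Interaction Λ M} {a : Action Λ M} {p : List Bool} (i2 : Interaction Λ M) :
      Executes i1 a p i1' → Executes (.alt i1 i2) a (false :: p) i1'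
  | altR {i2 i2' : Interaction Λ M} {a : Action Λ M} {p : List Bool} (i1 : Interaction Λ M) :
      Executes i2 a p i2' → Executes (.alt i1 i2) a (true :: p) i2'
  | parL {i1 i1' : Interaction Λ M} {a : Action Λ M} {p : List Bool} (i2 : Interaction Λ M) :
      Executes i1 a p i1' → Executes (.par i1 i2) a (false :: p) (.par i1' i2)
  | parR {i2 i2' : Interaction Λ M} {a : Action Λ M} {p : List Bool} (i1 : Interaction Λ M) :
      Executes i2 a p i2' → Executes (.par i1 i2) a (true :: p) (.par i1 i2')
  | strictL {i1 i1' : Interaction Λ M} {a : Action Λ M} {p : List Bool} (i2 : Interaction Λ M) :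
      Executes i1 a p i1' → Executes (.strict i1 i2) a (false :: p) (.strict i1' i2)
  | strictR {i1 i2 i2' : Interaction Λ M} {a : Action Λ M} {p : List Bool} :
      Terminates i1 → Executes i2 a p i2' → Executes (.strict i1 i2) a (true :: p) i2'
  | seqL {i1 i1' : Interaction Λ M} {a : Action Λ M} {p : List Bool} (i2 : Interaction Λ M) :
      Executes i1 a p i1' → Executes (.seq i1 i2) a (false :: p) (.seq i1' i2)
  | seqR {i1 i1' i2 i2' : Interaction Λ M} {a : Action Λ M} {p : List Bool} :
      Prunes i1 a.lifeline i1' → Executes i2 a p i2' →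
      Executes (.seq i1 i2) a (true :: p) (.seq i1' i2')
  | loopS {i1 i1' : Interaction Λ M} {a : Action Λ M} {p : List Bool} :
      Executes i1 a p i1' → Executes (.loopS i1) a (false :: p) (.strict i1' (.loopS i1))
  | loopW {i1 i1' i'' : Interaction Λ M} {a : Action Λ M} {p : List Bool} :
      Executes i1 a p i1' → Prunes (.loopW i1) a.lifeline i'' →
      Executes (.loopW i1) a (false :: p) (.seq i'' (.seq i1' (.loopW i1)))
  | loopP {i1 i1' : Interaction Λ M} {a : Action Λ M} {p : List Bool} :
      Executes i1 a p i1' → Executes (.loopP i1) a (false :: p) (.par i1' (.loopP i1))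

/-- Vertices of the analysis graph : `Ok` or a pair of an interaction and a
multi-trace over a current set of lifelines `L`. -/
inductive Vertex (Λ M : Type) : Type where
  | ok : Vertex Λ M
  | node : Set Λ → Interaction Λ M → MultiTrace Λ M → Vertex Λ M

/-- Rule `⤳_o` : emission of the `Ok` verdict on an empty multi-trace. -/
inductive StepOk : Vertex Λ M → Vertex Λ M → Prop where
  | mk (L : Set Λ) (i : Interaction Λ M) :
      StepOk (.node L i MultiTrace.eps) .ok

/-- Rule `⤳_r` : removal of a set `H` of lifelines (with `∅ ⊊ H ⊊ L`)
whose components are all empty. -/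
inductive StepRmv : Vertex Λ M → Vertex Λ M → Prop where
  | mk (L H : Set Λ) (i : Interaction Λ M) (μ : MultiTrace Λ M) :
      H.Nonempty → H ⊂ L → (∀ l ∈ H, μ l = []) →
      StepRmv (.node L i μ) (.node (L \ H) (rmv H i) (MultiTrace.rmv H μ))

/-- Rule `⤳_e` : simultaneous consumption of the action at the head of a
component of the multi-trace and execution of a matching action of the
interaction. -/
inductive StepExec : Vertex Λ M → Vertex Λ M → Prop where
  | mk (L : Set Λ) (i i' : Interaction Λ M) (a : Action Λ M) (p : List Bool)
      (μ : MultiTrace Λ M) :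
      a.lifeline ∈ L → Executes i a p i' →
      StepExec (.node L i (MultiTrace.prepend a μ)) (.node L i' μ)

/-- The transition relation `⤳` of the analysis graph. -/
def Step (v w : Vertex Λ M) : Prop := StepOk v w ∨ StepRmv v w ∨ StepExec v w

/-- One-unambiguity `a ⊑1∈ i` : in the projection of `i` onto `θ(a)`,
there is a unique position at which `a` is immediately executable. -/
def OneUnambiguous (L : Set Λ) (a : Action Λ M) (i : Interaction Λ M) : Prop :=
  ∃! p : List Bool, ∃ i'' : Interaction Λ M, Executes (rmv (L \ {a.lifeline}) i) a p i''

/-- A local trace on lifeline `l` viewed as a multi-trace over `{l}`. -/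
noncomputable def localMT (l : Λ) (w : List (Action Λ M)) : MultiTrace Λ M :=
  fun l' => if l' = l then w else []

/-- Right-nested `seq`-composition of a list of interactions (`∅` for the
empty list). -/
def seqComp : List (Interaction Λ M) → Interaction Λ M
  | [] => .empty
  | [i] => i
  | i :: rest => .seq i (seqComp rest)

/-- The operational trace semantics `σ_op(i)` generated by the two rules
`i↓ ⟹ ε ∈ σ_op(i)` and `i →[a@p] i' ∧ t ∈ σ_op(i') ⟹ a.t ∈ σ_op(i)`. -/
inductive OpTrace : Interaction Λ M → List (Action Λ M) → Prop where
  | empty {i : Interaction Λ M} : Terminates i → OpTrace i []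
  | step {i i' : Interaction Λ M} {a : Action Λ M} {p : List Bool} {t : List (Action Λ M)} :
      Executes i a p i' → OpTrace i' t → OpTrace i (a :: t)

end RV

namespace RV

/-- The interaction `i_ℓ` associated with a literal `ℓ` : the
seq-composition of the actions `l_j?m` over all clause indices `j` such
that `ℓ` occurs in clause `C_j` (and `∅` if `ℓ` occurs in no clause).
Literals are pairs `(x, b)` : the variable `x` with polarity `b`
(`true` = positive, `false` = negated); the lifelines are the clause
indices `Fin k`; the unique message is `()` and the actions are
receptions (`kind = false`). -/
noncomputable def litInt (n k : ℕ) (C : Fin k → Finset (Fin n × Bool))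
    (ℓ : Fin n × Bool) : Interaction (Fin k) Unit :=
  seqComp (((List.finRange k).filter (fun j => decide (ℓ ∈ C j))).map
    (fun j => Interaction.act ⟨j, false, ()⟩))

/-- The interaction
`i_φ = seq(alt(i_{x1},i_{¬x1}), seq(alt(i_{x2},i_{¬x2}), …, alt(i_{xn},i_{¬xn})…))`. -/
noncomputable def iphi (n k : ℕ) (C : Fin k → Finset (Fin n × Bool)) :
    Interaction (Fin k) Unit :=
  seqComp ((List.finRange n).map
    (fun x => Interaction.alt (litInt n k C (x, true)) (litInt n k C (x, false))))

/-- The multi-trace `μ_3SAT = (l1?m, …, lk?m)`. -/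
def muSAT (n k : ℕ) : MultiTrace (Fin k) Unit := fun j => [⟨j, false, ()⟩]

section MultiTraces

variable {Λ M : Type}

lemma singleton_prefix_iff_mem {α : Type} {a : α} {w : List α} (h : ∀ b ∈ w, b = a) :
    [a] <+: w ↔ a ∈ w := by
  cases w with
  | nil => simp
  | cons b w =>
    rw [h b List.mem_cons_self]
    simp

lemma proj_apply (t : List (Action Λ M)) (l : Λ) :
    proj t l = t.filter (fun a => a.lifeline = l) := by
  induction t with
  | nil => rfl
  | cons a t ih =>
    by_cases h : l = a.lifeline
    · subst h
      simp [proj, MultiTrace.prepend, ih]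
    · simp [proj, MultiTrace.prepend, h, ih, Ne.symm h]

lemma proj_append (t₁ t₂ : List (Action Λ M)) :
    proj (t₁ ++ t₂) = MultiTrace.concat (proj t₁) (proj t₂) := by
  funext l
  simp only [proj_apply, MultiTrace.concat, List.filter_append]

lemma concat_eps (μ : MultiTrace Λ M) : MultiTrace.concat μ MultiTrace.eps = μ := by
  funext l
  simp [MultiTrace.concat, MultiTrace.eps]

lemma concatSet_singleton (μ₁ μ₂ : MultiTrace Λ M) :
    concatSet {μ₁} {μ₂} = {MultiTrace.concat μ₁ μ₂} := by
  ext μ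
  simp [concatSet]

lemma concatSet_singleton_eps (S : Set (MultiTrace Λ M)) :
    concatSet S {MultiTrace.eps} = S := by
  ext μ
  simp [concatSet, concat_eps]

lemma sem_seqComp_cons (i : Interaction Λ M) (is : List (Interaction Λ M)) :
    sem (seqComp (i :: is)) = concatSet (sem i) (sem (seqComp is)) := by
  cases is with
  | nil => simp [seqComp, sem, concatSet_singleton_eps]
  | cons _ _ => rfl

lemma sem_seqComp_map_act (t : List (Action Λ M)) :
    sem (seqComp (t.map .act)) = {proj t} := by
  induction t with
  | nil => rfl
  | cons a t ih =>
    rw [List.map_cons, sem_seqComp_cons, ih, sem, concatSet_singleton, ← List.singleton_append,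
      proj_append]
    rfl

lemma sem_seqComp_map_alt {α : Type} (A : α → Bool → Interaction Λ M)
    (t : α → Bool → List (Action Λ M)) (hA : ∀ x b, sem (A x b) = {proj (t x b)})
    {xs : List α} (hxs : xs.Nodup) :
    sem (seqComp (xs.map fun x => .alt (A x true) (A x false))) =
      Set.range fun v : α → Bool => proj (xs.flatMap fun x => t x (v x)) := by
  induction xs with
  | nil => simp [seqComp, sem, proj]
  | cons x xs ih =>
    obtain ⟨hx, hxs⟩ := List.nodup_cons.mp hxs
    have hsem : ∀ b, proj (t x b) ∈ sem (.alt (A x true) (A x false)) := by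
      intro b
      cases b <;> simp [sem, hA]
    ext μ
    rw [List.map_cons, sem_seqComp_cons, ih hxs]
    constructor
    · rintro ⟨μ₁, h₁, _, ⟨v, rfl⟩, rfl⟩
      obtain ⟨b, rfl⟩ : ∃ b, μ₁ = proj (t x b) := by
        simp only [sem, hA, Set.mem_union, Set.mem_singleton_iff] at h₁
        exact h₁.elim (⟨true, ·⟩) (⟨false, ·⟩)
      refine ⟨Function.update v x b, ?_⟩
      have hrest : xs.flatMap (fun y => t y (Function.update v x b y)) =
          xs.flatMap (fun y => t y (v y)) :=
        List.flatMap_congr fun y hy => by rw [Function.update_of_ne (ne_of_mem_of_not_mem hy hx)]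
      dsimp only
      rw [List.flatMap_cons, proj_append, hrest, Function.update_self]
    · rintro ⟨v, rfl⟩
      exact ⟨_, hsem (v x), _, ⟨v, rfl⟩, by dsimp only; rw [List.flatMap_cons, proj_append]⟩

end MultiTraces

section Reduction

variable {n k : ℕ} (C : Fin k → Finset (Fin n × Bool))

noncomputable def litTrace (ℓ : Fin n × Bool) : List (Action (Fin k) Unit) :=
  ((List.finRange k).filter fun j => decide (ℓ ∈ C j)).map fun j => ⟨j, false, ()⟩

noncomputable def assignmentTrace (v : Fin n → Bool) : List (Action (Fin k) Unit) :=
  (List.finRange n).flatMap fun x => litTrace C (x, v x)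

lemma sem_litInt (ℓ : Fin n × Bool) : sem (litInt n k C ℓ) = {proj (litTrace C ℓ)} := by
  have := sem_seqComp_map_act (litTrace C ℓ)
  rwa [litTrace, List.map_map] at this

lemma sem_iphi : sem (iphi n k C) = Set.range fun v => proj (assignmentTrace C v) :=
  sem_seqComp_map_alt _ _ (fun x b => sem_litInt C (x, b)) (List.nodup_finRange n)

lemma mem_assignmentTrace {v : Fin n → Bool} {a : Action (Fin k) Unit} :
    a ∈ assignmentTrace C v ↔ a = ⟨a.lifeline, false, ()⟩ ∧ ∃ x, (x, v x) ∈ C a.lifeline := by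
  simp only [assignmentTrace, litTrace, List.mem_flatMap, List.mem_map, List.mem_filter,
    List.mem_finRange, true_and, decide_eq_true_eq]
  constructor
  · rintro ⟨x, j, hj, rfl⟩
    exact ⟨rfl, x, hj⟩
  · rintro ⟨ha, x, hx⟩
    exact ⟨x, a.lifeline, hx, ha.symm⟩

lemma muSAT_isPrefixOf_proj_iff (v : Fin n → Bool) :
    MultiTrace.isPrefixOf (muSAT n k) (proj (assignmentTrace C v)) ↔
      ∀ j, ∃ x, (x, v x) ∈ C j := by
  refine forall_congr' fun j => ?_
  have hlocal : ∀ a ∈ proj (assignmentTrace C v) j, a = ⟨j, false, ()⟩ := by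
    intro a ha
    obtain ⟨ha, hj⟩ := List.mem_filter.mp ((proj_apply _ j) ▸ ha)
    rw [((mem_assignmentTrace C).mp ha).1]
    simpa using hj
  rw [muSAT, singleton_prefix_iff_mem hlocal, proj_apply, List.mem_filter, mem_assignmentTrace]
  simp

end Reduction

theorem statement13_general (n k : ℕ) (C : Fin k → Finset (Fin n × Bool)) :
    (∃ v : Fin n → Bool, ∀ j : Fin k, ∃ lit ∈ C j, v lit.1 = lit.2) ↔
      muSAT n k ∈ prefixClosure (sem (iphi n k C)) := by
  rw [sem_iphi]
  simp only [prefixClosure, Set.mem_ofPred_eq, Set.exists_range_iff, muSAT_isPrefixOf_proj_iff]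
  exact exists_congr fun v => forall_congr' fun j =>
    ⟨fun ⟨lit, hlit, hv⟩ => ⟨lit.1, hv ▸ hlit⟩, fun ⟨x, hx⟩ => ⟨(x, v x), hx, rfl⟩⟩

/-- correctness of the 3SAT reduction : a 3-CNF formula
`φ = C1 ∧ … ∧ Ck` over variables `x1,…,xn` (each clause being a set of
three distinct literals) is satisfiable iff the multi-trace `μ_3SAT`
belongs to `\overline{σ_L(i_φ)}`. -/
theorem statement13 (n k : ℕ) (C : Fin k → Finset (Fin n × Bool))
    (hC : ∀ j, (C j).card = 3) :
    (∃ v : Fin n → Bool, ∀ j : Fin k, ∃ lit ∈ C j, v lit.1 = lit.2) ↔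
      muSAT n k ∈ prefixClosure (sem (iphi n k C)) :=
  statement13_general n k C

end RV
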